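/- arXiv:0802.2654 — 8 statements merged into one kernel-verified Lean document; each statement's English description precedes it below -/
import Mathlib

section
/- The number of odd coefficients of (1+x)^n equals 2^s(n), where s(n) is the number of 1s in the binary expansion of n. -/
open Polynomial Finset

/-- The number of odd coefficients of a polynomial over ℤ. -/
noncomputable def oddCoeffCount (p : Polynomial ℤ) : ℕ :=
  (p.support.filter fun j => Odd (p.coeff j)).card

noncomputable def f (n : ℕ) : ℕ := oddCoeffCount ((1 + X) ^ n)

/-- number of ones in the binary expansion -/
def s (n : ℕ) : ℕ := (Nat.digits 2 n).sum

lemma odd_choose_iff (n k : ℕ) :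
    Odd (n.choose k) ↔ Odd ((n % 2).choose (k % 2)) ∧ Odd ((n / 2).choose (k / 2)) := by
  have : Fact (Nat.Prime 2) := ⟨Nat.prime_two⟩
  have h : n.choose k % 2 = ((n % 2).choose (k % 2) * (n / 2).choose (k / 2)) % 2 :=
    Choose.choose_modEq_choose_mod_mul_choose_div_nat (n := n) (k := k) (p := 2)
  rw [Nat.mul_mod] at h
  simp only [Nat.odd_iff]
  rcases Nat.mod_two_eq_zero_or_one ((n % 2).choose (k % 2)) with h1 | h1 <;>
    rcases Nat.mod_two_eq_zero_or_one ((n / 2).choose (k / 2)) with h2 | h2 <;>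
      simp [h1, h2] at h ⊢ <;> omega

noncomputable def T (n : ℕ) : Finset ℕ :=
  (range (n + 1)).filter fun k => Odd (n.choose k)

lemma s_rec (n : ℕ) (hn : n ≠ 0) : s n = n % 2 + s (n / 2) := by
  unfold s
  rw [Nat.digits_def' (by norm_num : 1 < 2) (Nat.pos_of_ne_zero hn)]
  simp

lemma T_card (n : ℕ) : (T n).card = 2 ^ s n := by
  induction n using Nat.strong_induction_on with
  | _ n ih =>
    rcases eq_or_ne n 0 with rfl | hn
    · simp only [T, s]
      norm_num
      decide
    set m := n / 2 with hm
    have hmlt : m < n := Nat.div_lt_self (Nat.pos_of_ne_zero hn) one_lt_two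
    have hs : s n = n % 2 + s m := s_rec n hn
    rcases Nat.mod_two_eq_zero_or_one n with hb | hb
    · have hT : T n = (T m).image (fun j => 2 * j) := by
        ext k
        simp only [T, mem_filter, mem_image, mem_range]
        constructor
        · rintro ⟨hk, hodd⟩
          rw [odd_choose_iff, hb] at hodd
          obtain ⟨h1, h2⟩ := hodd
          have hk2 : k % 2 = 0 := by
            rcases Nat.mod_two_eq_zero_or_one k with h | h
            · exact h
            · rw [h] at h1; simp [Nat.choose] at h1
          exact ⟨k / 2, ⟨by omega, h2⟩, by omega⟩
        · rintro ⟨j, ⟨hj, hodd⟩, rfl⟩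
          refine ⟨by omega, ?_⟩
          rw [odd_choose_iff, hb]
          refine ⟨by simp, ?_⟩
          simpa [Nat.mul_div_cancel_left _ (by norm_num : 0 < 2)] using hodd
      rw [hT, Finset.card_image_of_injective _ (fun a b h => by omega), ih m hmlt, hs, hb, zero_add]
    · have hT : T n = (T m).image (fun j => 2 * j) ∪ (T m).image (fun j => 2 * j + 1) := by
        ext k
        simp only [T, mem_union, mem_filter, mem_image, mem_range]
        constructor
        · rintro ⟨hk, hodd⟩
          rw [odd_choose_iff, hb] at hodd
          obtain ⟨h1, h2⟩ := hodd
          rcases Nat.mod_two_eq_zero_or_one k with h | h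
          · exact Or.inl ⟨k / 2, ⟨by omega, h2⟩, by omega⟩
          · exact Or.inr ⟨k / 2, ⟨by omega, h2⟩, by omega⟩
        · rintro (⟨j, ⟨hj, hodd⟩, rfl⟩ | ⟨j, ⟨hj, hodd⟩, rfl⟩) <;>
          · refine ⟨by omega, ?_⟩
            rw [odd_choose_iff, hb]
            constructor
            · have : (2 * j) % 2 = 0 := by omega
              first
               | (rw [this]; simp [Nat.choose])
               | (have h1 : (2 * j + 1) % 2 = 1 := by omega
                  rw [h1]; simp [Nat.choose])
            · have : (2 * j) / 2 = j := by omega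
              first
               | (rw [this]; exact hodd)
               | (have h1 : (2 * j + 1) / 2 = j := by omega
                  rw [h1]; exact hodd)
      rw [hT, Finset.card_union_of_disjoint, Finset.card_image_of_injective _
          (fun a b h => by omega), Finset.card_image_of_injective _ (fun a b h => by omega),
          ih m hmlt, hs, hb]
      · ring
      · simp only [Finset.disjoint_left, mem_image]
        rintro a ⟨j, _, rfl⟩ ⟨i, _, h⟩
        omega

theorem stmt_1 : ∀ n : ℕ, f n = 2 ^ s n := by
  intro n
  have hcoeff : ∀ k, ((1 + X : ℤ[X]) ^ n).coeff k = (n.choose k : ℤ) := by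
    intro k
    rw [add_comm]
    exact coeff_X_add_one_pow ℤ n k
  have hset : ((1 + X : ℤ[X]) ^ n).support.filter (fun j => Odd (((1 + X : ℤ[X]) ^ n).coeff j))
      = T n := by
    ext j
    simp only [T, mem_filter, mem_support_iff, mem_range, hcoeff]
    rw [Int.odd_coe_nat]
    constructor
    · rintro ⟨_, hodd⟩
      refine ⟨?_, hodd⟩
      by_contra h
      rw [Nat.choose_eq_zero_of_lt (by omega)] at hodd
      simp at hodd
    · rintro ⟨hj, hodd⟩
      have := hodd.pos
      exact ⟨by exact_mod_cast this.ne', hodd⟩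
  rw [f, oddCoeffCount, hset, T_card]
end

section
/- For all n ≥ 0, g(4n+1) = 3·g(n), where g(n) is the number of odd coefficients of (1+x+x^2)^n. -/
open Polynomial

noncomputable def g (n : ℕ) : ℕ := oddCoeffCount ((1 + X + X ^ 2) ^ n)

/-!
Modulo 2, squaring a polynomial is the Frobenius, so `(1 + X + X²)^(4n+1) ≡ P(X⁴) · (1 + X + X²)`
with `P = (1 + X + X²)^n`. Since `1 + X + X²` has degree `< 4`, the three shifted copies of
`P(X⁴)` have pairwise disjoint supports, and every nonzero coefficient of `P` yields exactly
three nonzero coefficients of the product.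
-/

theorem oddCoeffCount_eq_card_support_map (p : ℤ[X]) :
    oddCoeffCount p = (p.map (Int.castRingHom (ZMod 2))).support.card := by
  unfold oddCoeffCount
  congr 1
  ext m
  simp only [Finset.mem_filter, mem_support_iff, coeff_map, Int.coe_castRingHom, ne_eq,
    ZMod.intCast_zmod_eq_zero_iff_dvd, Int.odd_iff]
  omega

section ExpandMul

variable {R : Type*} [CommSemiring R] {k : ℕ} {h : R[X]}

theorem coeff_expand_mul_of_natDegree_lt (hh : h.natDegree < k) (f : R[X]) (m : ℕ) :
    (expand R k f * h).coeff m = f.coeff (m / k) * h.coeff (m % k) := by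
  have hk : 0 < k := by omega
  induction f using Polynomial.induction_on' with
  | add p q hp hq => simp only [map_add, add_mul, coeff_add, hp, hq]
  | monomial n a =>
    rw [expand_monomial, ← C_mul_X_pow_eq_monomial, mul_assoc, coeff_C_mul, coeff_X_pow_mul',
      ← C_mul_X_pow_eq_monomial, coeff_C_mul_X_pow]
    by_cases hn : m / k = n
    · subst hn
      rw [if_pos (Nat.div_mul_le_self m k), if_pos rfl, ← Nat.mod_eq_sub_div_mul]
    · rw [if_neg hn, zero_mul]
      split_ifs with hle
      · have hgap : k ≤ m - n * k := by
          have hlt : n < m / k := lt_of_le_of_ne ((Nat.le_div_iff_mul_le hk).2 hle) (Ne.symm hn)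
          have : (n + 1) * k ≤ m := (Nat.le_div_iff_mul_le hk).1 hlt
          rw [add_mul, one_mul] at this
          omega
        rw [coeff_eq_zero_of_natDegree_lt (hh.trans_le hgap), mul_zero]
      · rw [mul_zero]

theorem card_support_expand_mul_of_natDegree_lt [NoZeroDivisors R] (hh : h.natDegree < k)
    (f : R[X]) : (expand R k f * h).support.card = f.support.card * h.support.card := by
  have hk : 0 < k := by omega
  have lt_of_mem {j : ℕ} (hj : j ∈ h.support) : j < k :=
    (le_natDegree_of_mem_supp j hj).trans_lt hh
  have div_mod {i j : ℕ} (hj : j < k) : (k * i + j) / k = i ∧ (k * i + j) % k = j :=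
    ⟨by rw [Nat.mul_add_div hk, Nat.div_eq_of_lt hj, add_zero],
      by rw [mul_comm, Nat.mul_add_mod_of_lt hj]⟩
  have mem_support (m : ℕ) :
      m ∈ (expand R k f * h).support ↔ (m / k, m % k) ∈ f.support ×ˢ h.support := by
    simp only [mem_support_iff, coeff_expand_mul_of_natDegree_lt hh, Finset.mem_product,
      ne_eq, mul_eq_zero, not_or]
  rw [← Finset.card_product]
  refine Finset.card_nbij' (fun m ↦ (m / k, m % k)) (fun ij ↦ k * ij.1 + ij.2)
    (fun m hm ↦ (mem_support m).1 hm) (fun ⟨i, j⟩ hij ↦ ?_) (fun m _ ↦ Nat.div_add_mod m k)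
    (fun ⟨i, j⟩ hij ↦ ?_)
  · obtain ⟨hdiv, hmod⟩ := div_mod (i := i) (lt_of_mem (Finset.mem_product.1 hij).2)
    rwa [Finset.mem_coe, mem_support, hdiv, hmod]
  · obtain ⟨hdiv, hmod⟩ := div_mod (i := i) (lt_of_mem (Finset.mem_product.1 hij).2)
    exact Prod.ext hdiv hmod

end ExpandMul

theorem stmt_3 : ∀ n : ℕ, g (4 * n + 1) = 3 * g n := by
  intro n
  set P : (ZMod 2)[X] := 1 + X + X ^ 2 with hP
  have map_pow_eq (m : ℕ) :
      ((1 + X + X ^ 2 : ℤ[X]) ^ m).map (Int.castRingHom (ZMod 2)) = P ^ m := by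
    simp [P]
  have natDegree_P : P.natDegree < 4 := by
    have : P.natDegree ≤ 2 := by rw [hP]; compute_degree
    omega
  have support_P : P.support = {0, 1, 2} := by
    ext m
    rcases m with _ | _ | _ | m <;> simp [P, coeff_one, coeff_X, coeff_X_pow]
  have frobenius : P ^ (4 * n + 1) = expand (ZMod 2) 4 (P ^ n) * P := by
    rw [pow_succ, show P ^ (4 * n) = ((P ^ n) ^ 2) ^ 2 by ring, ← ZMod.expand_card,
      ← ZMod.expand_card, expand_expand]
  rw [g, g, oddCoeffCount_eq_card_support_map, oddCoeffCount_eq_card_support_map, map_pow_eq,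
    map_pow_eq, frobenius, card_support_expand_mul_of_natDegree_lt natDegree_P, support_P,
    mul_comm]
  rfl
end

section
/- For all n ≥ 0: g₃(8n+1) = g₃(4n+1), g₃(8n+3) = g₃(2n+1), g₃(8n+5) = 4·g₃(2n+1), and g₃(8n+7) = 2·g₃(4n+3), where g₃(n) is the number of odd coefficients of (1+x+x^2+x^3)^n. -/
open Polynomial

noncomputable def g3 (n : ℕ) : ℕ := oddCoeffCount ((1 + X + X ^ 2 + X ^ 3) ^ n)

noncomputable def Scard (m : ℕ) : ℕ := (((1 + X : (ZMod 2)[X]) ^ m).support).card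

lemma two_eq_zero_poly : (2 : (ZMod 2)[X]) = 0 := by
  have h : (Polynomial.C (2 : ZMod 2)) = 0 := by
    rw [show (2 : ZMod 2) = 0 from rfl, map_zero]
  calc (2 : (ZMod 2)[X]) = C 2 := (Polynomial.C_eq_natCast 2).symm.trans (by norm_num)
    _ = 0 := h

lemma support_expand2 (f : (ZMod 2)[X]) :
    (Polynomial.expand (ZMod 2) 2 f).support = f.support.image (2 * ·) := by
  ext n
  simp only [Polynomial.mem_support_iff, Finset.mem_image, Polynomial.coeff_expand two_pos]
  constructor
  · intro h
    split_ifs at h with hd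
    · obtain ⟨k, rfl⟩ := hd
      exact ⟨k, by simpa [Nat.mul_div_cancel_left k two_pos] using h, rfl⟩
    · exact absurd rfl h
  · rintro ⟨k, hk, rfl⟩
    rw [if_pos ⟨k, rfl⟩]
    simpa [Nat.mul_div_cancel_left k two_pos] using hk

lemma expand2_pow (m : ℕ) :
    Polynomial.expand (ZMod 2) 2 ((1 + X : (ZMod 2)[X]) ^ m) = (1 + X) ^ (2 * m) := by
  rw [map_pow, map_add, map_one, Polynomial.expand_X]
  have h2' : (1 + X ^ 2 : (ZMod 2)[X]) = (1 + X) ^ 2 := by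
    have h : (1 + X) ^ 2 = (1 + X ^ 2 : (ZMod 2)[X]) + 2 * X := by ring
    rw [h, two_eq_zero_poly]; ring
  rw [h2', ← pow_mul]

lemma Scard_even (m : ℕ) : Scard (2 * m) = Scard m := by
  unfold Scard
  rw [← expand2_pow, support_expand2, Finset.card_image_of_injective _
    (fun a b h => by omega)]

lemma support_even (m : ℕ) : ∀ n ∈ ((1 + X : (ZMod 2)[X]) ^ (2 * m)).support, 2 ∣ n := by
  intro n hn
  rw [← expand2_pow, support_expand2, Finset.mem_image] at hn
  obtain ⟨k, _, rfl⟩ := hn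
  exact ⟨k, rfl⟩

lemma Scard_odd (m : ℕ) : Scard (2 * m + 1) = 2 * Scard m := by
  have key : ((1 + X : (ZMod 2)[X]) ^ (2 * m + 1)).support
      = ((1 + X : (ZMod 2)[X]) ^ (2 * m)).support ∪
        (((1 + X : (ZMod 2)[X]) ^ (2 * m)).support.image (· + 1)) := by
    have hmul : ((1 + X : (ZMod 2)[X]) ^ (2 * m + 1))
        = (1 + X) ^ (2 * m) + X * (1 + X) ^ (2 * m) := by ring
    ext n
    simp only [Finset.mem_union, Finset.mem_image, Polynomial.mem_support_iff, hmul,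
      Polynomial.coeff_add]
    rcases Nat.even_or_odd n with ⟨k, hk⟩ | ⟨k, hk⟩
    · have hx : (X * (1 + X : (ZMod 2)[X]) ^ (2 * m)).coeff n = 0 := by
        rcases Nat.eq_zero_or_pos n with rfl | hpos
        · exact Polynomial.coeff_X_mul_zero _
        · obtain ⟨j, rfl⟩ : ∃ j, n = j + 1 := ⟨n - 1, by omega⟩
          rw [Polynomial.coeff_X_mul]
          by_contra h
          have := support_even m j (Polynomial.mem_support_iff.mpr h)
          omega
      constructor
      · intro h
        exact Or.inl (by rw [hx, add_zero] at h; exact h)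
      · rintro (h | ⟨a, ha, rfl⟩)
        · rw [hx, add_zero]; exact h
        · exact absurd (support_even m a (Polynomial.mem_support_iff.mpr ha)) (by omega)
    · obtain ⟨j, rfl⟩ : ∃ j, n = j + 1 := ⟨n - 1, by omega⟩
      have hx : ((1 + X : (ZMod 2)[X]) ^ (2 * m)).coeff (j + 1) = 0 := by
        by_contra h
        have := support_even m (j + 1) (Polynomial.mem_support_iff.mpr h)
        omega
      rw [Polynomial.coeff_X_mul, hx, zero_add]
      constructor
      · intro h
        exact Or.inr ⟨j, h, rfl⟩
      · rintro (h | ⟨a, ha, hae⟩)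
        · exact absurd h (by simp [hx])
        · have : a = j := by omega
          rwa [← this]
  have hdisj : Disjoint ((1 + X : (ZMod 2)[X]) ^ (2 * m)).support
      ((((1 + X : (ZMod 2)[X]) ^ (2 * m)).support).image (· + 1)) := by
    rw [Finset.disjoint_left]
    intro a ha hb
    simp only [Finset.mem_image] at hb
    obtain ⟨b, hb, rfl⟩ := hb
    have h1 := support_even m _ ha
    have h2 := support_even m _ hb
    omega
  show (((1 + X : (ZMod 2)[X]) ^ (2 * m + 1)).support).card = 2 * Scard m
  rw [key, Finset.card_union_of_disjoint hdisj,
    Finset.card_image_of_injective _ (fun a b h => by omega)]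
  have : (((1 + X : (ZMod 2)[X]) ^ (2 * m)).support).card = Scard m := Scard_even m
  rw [this]; ring

lemma g3_eq_Scard (n : ℕ) : g3 n = Scard (3 * n) := by
  unfold g3 oddCoeffCount Scard
  set p : ℤ[X] := (1 + X + X ^ 2 + X ^ 3) ^ n with hp
  have hmap : p.map (Int.castRingHom (ZMod 2)) = (1 + X) ^ (3 * n) := by
    rw [hp, Polynomial.map_pow]
    have hmap1 : ((1 + X + X ^ 2 + X ^ 3 : ℤ[X]).map (Int.castRingHom (ZMod 2)))
        = (1 + X + X ^ 2 + X ^ 3 : (ZMod 2)[X]) := by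
      simp [Polynomial.map_add, Polynomial.map_pow]
    rw [hmap1]
    have h3 : (1 + X + X ^ 2 + X ^ 3 : (ZMod 2)[X]) = (1 + X) ^ 3 := by
      have h : (1 + X) ^ 3 = (1 + X + X ^ 2 + X ^ 3 : (ZMod 2)[X]) + 2 * (X + X ^ 2) := by
        ring
      rw [h, two_eq_zero_poly]; ring
    rw [h3, ← pow_mul, mul_comm 3 n, pow_mul, ← pow_mul, mul_comm n 3]
  rw [← hmap]
  congr 1
  ext j
  simp only [Finset.mem_filter, Polynomial.mem_support_iff, Polynomial.coeff_map,
    eq_intCast, Ne, ZMod.intCast_zmod_eq_zero_iff_dvd, Nat.cast_ofNat, Int.odd_iff]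
  omega

theorem stmt_6 : ∀ n : ℕ,
    g3 (8 * n + 1) = g3 (4 * n + 1) ∧
    g3 (8 * n + 3) = g3 (2 * n + 1) ∧
    g3 (8 * n + 5) = 4 * g3 (2 * n + 1) ∧
    g3 (8 * n + 7) = 2 * g3 (4 * n + 3) := by
  intro n
  refine ⟨?_, ?_, ?_, ?_⟩
  · rw [g3_eq_Scard, g3_eq_Scard,
      show 3 * (8 * n + 1) = 2 * (2 * (2 * (3 * n)) + 1) + 1 by ring,
      show 3 * (4 * n + 1) = 2 * (2 * (3 * n) + 1) + 1 by ring]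
    simp only [Scard_even, Scard_odd]
  · rw [g3_eq_Scard, g3_eq_Scard,
      show 3 * (8 * n + 3) = 2 * (2 * (2 * (3 * n + 1))) + 1 by ring,
      show 3 * (2 * n + 1) = 2 * (3 * n + 1) + 1 by ring]
    simp only [Scard_even, Scard_odd]
  · rw [g3_eq_Scard, g3_eq_Scard,
      show 3 * (8 * n + 5) = 2 * (2 * (2 * (3 * n + 1) + 1) + 1) + 1 by ring,
      show 3 * (2 * n + 1) = 2 * (3 * n + 1) + 1 by ring]
    simp only [Scard_even, Scard_odd]
    ring
  · rw [g3_eq_Scard, g3_eq_Scard,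
      show 3 * (8 * n + 7) = 2 * (2 * (2 * (3 * n + 2) + 1)) + 1 by ring,
      show 3 * (4 * n + 3) = 2 * (2 * (3 * n + 2)) + 1 by ring]
    simp only [Scard_even, Scard_odd]
end

section
/- For all n ≥ 0, h₃(8n+3) = h₃(2n+1) + 4·h₃(n), where h₃(n) is the number of odd coefficients of (1+x+x^3)^n. -/
/-!
Odd coefficients of an integer polynomial are the nonzero coefficients of its reduction mod 2,
and over `𝔽₂` Frobenius gives `g(X)^(2^k) = g(X^(2^k))`. With `f = 1 + X + X³` and `g = fⁿ`,
```
f^(2n+1) = g(X²) + X · ((1 + X) g)(X²),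
f^(8n+3) = f³ · g(X⁸) = (1 + X² + X⁵ + X⁶ + X⁷) · g(X⁸) + X · ((1 + X) g)(X⁸),
```
since `f³ = 1 + X + X² + X⁵ + X⁶ + X⁷ + X⁹` mod 2. The summands `X^a · u(X^m)` with distinct
residues `a` mod `m` have disjoint supports, each as large as that of `u`. Hence
`h₃(2n+1) = |g| + |(1 + X) g|` and `h₃(8n+3) = 5 |g| + |(1 + X) g|`.
-/

open Polynomial

noncomputable def h3 (n : ℕ) : ℕ := oddCoeffCount ((1 + X + X ^ 3) ^ n)

section

variable {R : Type*} [CommSemiring R] {m : ℕ} [NeZero m]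

theorem coeff_sum_X_pow_mul_expand (u : Fin m → R[X]) (k : ℕ) :
    (∑ a : Fin m, X ^ (a : ℕ) * expand R m (u a)).coeff k =
      (u (Fin.ofNat m k)).coeff (k / m) := by
  have hm : 0 < m := Nat.pos_of_neZero m
  rw [finsetSum_coeff, Finset.sum_eq_single (Fin.ofNat m k)]
  · rw [coeff_X_pow_mul', coeff_expand hm, Fin.val_ofNat, if_pos (Nat.mod_le k m),
      if_pos (Nat.dvd_sub_mod k), ← Nat.div_eq_sub_mod_div]
  · intro b _ hb
    rw [coeff_X_pow_mul', coeff_expand hm]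
    split_ifs with hbk hdvd
    · refine absurd (Fin.ext ?_) hb
      rw [Fin.val_ofNat, ← (Nat.modEq_iff_dvd' hbk).2 hdvd, Nat.mod_eq_of_lt b.isLt]
    · rfl
    · rfl
  · exact fun h => absurd (Finset.mem_univ _) h

theorem card_support_sum_X_pow_mul_expand (u : Fin m → R[X]) :
    (∑ a : Fin m, X ^ (a : ℕ) * expand R m (u a)).support.card =
      ∑ a, (u a).support.card := by
  have hm : 0 < m := Nat.pos_of_neZero m
  have hdiv (a : Fin m) (j : ℕ) : (j * m + a) / m = j := by
    rw [Nat.mul_comm, Nat.mul_add_div hm, Nat.div_eq_of_lt a.isLt, add_zero]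
  have hmod (a : Fin m) (j : ℕ) : Fin.ofNat m (j * m + a) = a := by
    ext
    rw [Fin.val_ofNat, Nat.mul_add_mod_self_right, Nat.mod_eq_of_lt a.isLt]
  rw [← Finset.card_sigma]
  refine Finset.card_nbij' (fun k => ⟨Fin.ofNat m k, k / m⟩) (fun x => x.2 * m + x.1)
    ?_ ?_ (fun k _ => Nat.div_add_mod' k m) (fun x _ => by simp only [hmod, hdiv])
  · intro k hk
    simpa only [Finset.coe_sigma, Set.mem_sigma_iff, Finset.mem_coe, Finset.mem_univ, true_and,
      mem_support_iff, coeff_sum_X_pow_mul_expand] using hk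
  · rintro ⟨a, j⟩ hj
    simpa only [Finset.coe_sigma, Set.mem_sigma_iff, Finset.mem_coe, Finset.mem_univ, true_and,
      mem_support_iff, coeff_sum_X_pow_mul_expand, hmod, hdiv] using hj

end

theorem h3_eq_card_support (n : ℕ) :
    h3 n = (((1 : (ZMod 2)[X]) + X + X ^ 3) ^ n).support.card := by
  simp [h3, oddCoeffCount_eq_card_support_map, Polynomial.map_pow]

theorem ZMod.expand_eight (g : (ZMod 2)[X]) : expand (ZMod 2) 8 g = g ^ 8 := by
  rw [show 8 = 2 * (2 * 2) from rfl, expand_mul, expand_mul, ZMod.expand_card, ZMod.expand_card,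
    ZMod.expand_card, ← pow_mul, ← pow_mul]

theorem trinomial_pow_two_mul_add_one (n : ℕ) :
    ((1 : (ZMod 2)[X]) + X + X ^ 3) ^ (2 * n + 1) =
      ∑ a : Fin 2, X ^ (a : ℕ) *
        expand (ZMod 2) 2 (![(1 + X + X ^ 3) ^ n, (1 + X) * (1 + X + X ^ 3) ^ n] a) := by
  simp only [Fin.sum_univ_two, Matrix.cons_val_zero, Matrix.cons_val_one, Fin.val_zero,
    Fin.val_one, map_mul, map_add, map_one, expand_X]
  rw [ZMod.expand_card]
  ring

theorem trinomial_pow_three :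
    ((1 : (ZMod 2)[X]) + X + X ^ 3) ^ 3 = 1 + X + X ^ 2 + X ^ 5 + X ^ 6 + X ^ 7 + X ^ 9 := by
  linear_combination (X + X ^ 2 + 2 * X ^ 3 + 3 * X ^ 4 + X ^ 5 + X ^ 6 + X ^ 7 : (ZMod 2)[X]) *
    CharTwo.two_eq_zero (R := (ZMod 2)[X])

theorem trinomial_pow_eight_mul_add_three (n : ℕ) :
    ((1 : (ZMod 2)[X]) + X + X ^ 3) ^ (8 * n + 3) =
      ∑ a : Fin 8, X ^ (a : ℕ) * expand (ZMod 2) 8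
        (![(1 + X + X ^ 3) ^ n, (1 + X) * (1 + X + X ^ 3) ^ n, (1 + X + X ^ 3) ^ n, 0, 0,
          (1 + X + X ^ 3) ^ n, (1 + X + X ^ 3) ^ n, (1 + X + X ^ 3) ^ n] a) := by
  simp only [Fin.sum_univ_eight, Matrix.cons_val, Fin.isValue, Fin.coe_ofNat_eq_mod,
    Nat.reduceMod, map_mul, map_add, map_one, map_zero, expand_X]
  rw [ZMod.expand_eight, pow_add, trinomial_pow_three]
  ring

theorem stmt_9 : ∀ n : ℕ, h3 (8 * n + 3) = h3 (2 * n + 1) + 4 * h3 n := by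
  intro n
  rw [h3_eq_card_support, h3_eq_card_support, h3_eq_card_support,
    trinomial_pow_eight_mul_add_three, trinomial_pow_two_mul_add_one,
    card_support_sum_X_pow_mul_expand, card_support_sum_X_pow_mul_expand]
  simp only [Fin.sum_univ_eight, Fin.sum_univ_two, Matrix.cons_val, support_zero,
    Finset.card_empty]
  ring
end

section
/- For all k ≥ 0 and all n < 2^k - 1, g(n) < g(2^k - 1), where g(n) is the number of odd coefficients of (1+x+x^2)^n; i.e., g(2^k - 1) = (2^(k+2) - (-1)^k)/3 is a strict maximum among g(0),...,g(2^k - 2). -/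
/-!
Reducing mod 2, `g n` is the number of monomials of `T ^ n` with `T = 1 + X + X ^ 2` over `𝔽₂`.
There squaring is `expand 2`, so `T ^ (2n) = T ^ n (X²)` and
`T ^ (2n+1) = ((1 + X) T ^ n)(X²) + X · T ^ n (X²)`, with even and odd monomials kept apart.
Using `(1 + X) T = 1 + X³`, this gives `w (2n) = w n` and `w (2n+1) = w n + 2 w ⌊n/2⌋` for the
weight `w n = g n`. Hence `M k = w (2^k - 1)` satisfies `M (k+1) = M k + 2 M (k-1)`, which yields
the closed form, and induction on `k` shows `w n < M k` for `n < 2^k - 1`: an even `n = 2m`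
only reaches `M (k-1)`, and an odd `n = 2m+1` loses in its first term.
-/

open Polynomial

namespace Polynomial

variable {R : Type*} [CommSemiring R]

theorem card_support_X_mul (p : R[X]) : (X * p).support.card = p.support.card := by
  have : (X * p).support = p.support.map (addRightEmbedding 1) := by
    ext (_ | j) <;> simp [coeff_X_mul]
  rw [this, Finset.card_map]

theorem coeff_expand_two_add_X_mul_expand_two (q r : R[X]) (s : ℕ ⊕ ℕ) :
    (expand R 2 q + X * expand R 2 r).coeff (Equiv.natSumNatEquivNat s) =
      Sum.elim q.coeff r.coeff s := by
  rcases s with m | m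
  · suffices (X * expand R 2 r).coeff (2 * m) = 0 by simp [this, coeff_expand_mul']
    rcases m with _ | m
    · simp
    · rw [show 2 * (m + 1) = 2 * m + 1 + 1 by ring, coeff_X_mul, coeff_expand two_pos,
        if_neg (by omega)]
  · simp [Equiv.natSumNatEquivNat_apply, coeff_expand, coeff_X_mul]

theorem card_support_expand_two_add_X_mul_expand_two (q r : R[X]) :
    (expand R 2 q + X * expand R 2 r).support.card = q.support.card + r.support.card := by
  have : (expand R 2 q + X * expand R 2 r).support =
      (q.support.disjSum r.support).map Equiv.natSumNatEquivNat.toEmbedding := by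
    ext j
    obtain ⟨s, rfl⟩ := Equiv.natSumNatEquivNat.surjective j
    rw [mem_support_iff, coeff_expand_two_add_X_mul_expand_two, Finset.mem_map_equiv]
    rcases s with m | m <;> simp
  rw [this, Finset.card_map, Finset.card_disjSum]

end Polynomial

namespace TrinomialModTwo

local notation "T" => (1 + X + X ^ 2 : (ZMod 2)[X])

noncomputable def weight (n : ℕ) : ℕ := (T ^ n).support.card

theorem g_eq_weight (n : ℕ) : g n = weight n := by
  simp [g, oddCoeffCount_eq_card_support_map, weight]

theorem pow_two_mul_eq_expand (n : ℕ) : T ^ (2 * n) = expand (ZMod 2) 2 (T ^ n) := by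
  rw [ZMod.expand_card, pow_mul']

theorem weight_zero : weight 0 = 1 := by
  rw [weight, pow_zero, ← C_1, support_C one_ne_zero, Finset.card_singleton]

theorem weight_pos (n : ℕ) : 0 < weight n := by
  have hT : T ≠ 0 := fun h => by simpa using congrArg (coeff · 0) h
  exact Nat.pos_of_ne_zero (card_support_eq_zero.not.mpr (pow_ne_zero n hT))

theorem weight_two_mul (n : ℕ) : weight (2 * n) = weight n := by
  simpa only [weight, pow_two_mul_eq_expand, map_zero, mul_zero, add_zero, support_zero,
    Finset.card_empty] using card_support_expand_two_add_X_mul_expand_two (T ^ n) 0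

theorem card_support_one_add_X_mul_pow (n : ℕ) :
    ((1 + X) * T ^ n).support.card = 2 * weight (n / 2) := by
  obtain ⟨m, rfl | rfl⟩ := Nat.even_or_odd' n
  · have : (1 + X) * T ^ (2 * m) =
        expand (ZMod 2) 2 (T ^ m) + X * expand (ZMod 2) 2 (T ^ m) := by
      rw [pow_two_mul_eq_expand]; ring
    rw [this, card_support_expand_two_add_X_mul_expand_two, weight, two_mul,
      Nat.mul_div_cancel_left m two_pos]
  · have : (1 + X) * T ^ (2 * m + 1) =
        expand (ZMod 2) 2 (T ^ m) + X * expand (ZMod 2) 2 (X * T ^ m) := by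
      rw [pow_succ, pow_two_mul_eq_expand, map_mul, expand_X]
      -- `(1 + X) * T = 1 + X ^ 3` in characteristic 2
      linear_combination (X + X ^ 2) * expand (ZMod 2) 2 (T ^ m) *
        CharTwo.two_eq_zero (R := (ZMod 2)[X])
    rw [this, card_support_expand_two_add_X_mul_expand_two, card_support_X_mul,
      show (2 * m + 1) / 2 = m by omega, weight, two_mul]

theorem weight_two_mul_add_one (n : ℕ) :
    weight (2 * n + 1) = weight n + 2 * weight (n / 2) := by
  have : T ^ (2 * n + 1) =
      expand (ZMod 2) 2 ((1 + X) * T ^ n) + X * expand (ZMod 2) 2 (T ^ n) := by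
    rw [pow_succ, pow_two_mul_eq_expand, map_mul, map_add, map_one, expand_X]; ring
  unfold weight
  rw [this, card_support_expand_two_add_X_mul_expand_two, card_support_one_add_X_mul_pow,
    weight, add_comm]

-- For `k = 0` the last term is `weight 0`, by truncated subtraction.
theorem weight_two_pow_succ_sub_one (k : ℕ) :
    weight (2 ^ (k + 1) - 1) = weight (2 ^ k - 1) + 2 * weight (2 ^ (k - 1) - 1) := by
  have h : 2 ^ (k + 1) - 1 = 2 * (2 ^ k - 1) + 1 := by
    have := Nat.one_le_two_pow (n := k); rw [pow_succ]; omega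
  have h' : (2 ^ k - 1) / 2 = 2 ^ (k - 1) - 1 := by
    rcases k with _ | k
    · rfl
    · rw [pow_succ, Nat.add_sub_cancel]; omega
  rw [h, weight_two_mul_add_one, h']

theorem weight_lt_weight_two_pow_sub_one (k : ℕ) {n : ℕ} (hn : n < 2 ^ k - 1) :
    weight n < weight (2 ^ k - 1) := by
  induction k using Nat.strong_induction_on generalizing n with
  | _ k ih =>
  have weight_le (j : ℕ) (hj : j < k) (m : ℕ) (hm : m < 2 ^ j) :
      weight m ≤ weight (2 ^ j - 1) := by
    rcases (Nat.le_sub_one_of_lt hm).lt_or_eq with h | rfl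
    · exact (ih j hj h).le
    · rfl
  rcases k with _ | k
  · simp at hn
  have hrec := weight_two_pow_succ_sub_one k
  have hpos := weight_pos (2 ^ (k - 1) - 1)
  have hpow : 2 ^ (k + 1) = 2 * 2 ^ k := pow_succ' 2 k
  obtain ⟨m, rfl | rfl⟩ := Nat.even_or_odd' n
  · have := weight_le k (by omega) m (by omega)
    rw [weight_two_mul]; omega
  · have hm : m < 2 ^ k - 1 := by omega
    have h1 := ih k (by omega) hm
    have h2 := weight_le (k - 1) (by omega) (m / 2) (by
      rcases k with _ | k
      · omega
      · rw [pow_succ] at hm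
        rw [Nat.add_sub_cancel]
        omega)
    rw [weight_two_mul_add_one]; omega

theorem three_mul_weight_two_pow_sub_one (k : ℕ) :
    (3 : ℤ) * weight (2 ^ k - 1) = 2 ^ (k + 2) - (-1) ^ k := by
  induction k using Nat.twoStepInduction with
  | zero => simp [weight_zero]
  | one => rw [weight_two_pow_succ_sub_one 0]; simp [weight_zero]
  | more k ih0 ih1 =>
    rw [weight_two_pow_succ_sub_one (k + 1), Nat.add_sub_cancel]
    push_cast
    linear_combination ih1 + 2 * ih0

end TrinomialModTwo

open TrinomialModTwo in
theorem stmt_11 : ∀ k : ℕ, (∀ n : ℕ, n < 2 ^ k - 1 → g n < g (2 ^ k - 1)) ∧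
    (3 : ℤ) * g (2 ^ k - 1) = 2 ^ (k + 2) - (-1) ^ k := by
  intro k
  simp only [g_eq_weight]
  exact ⟨fun n => weight_lt_weight_two_pow_sub_one k, three_mul_weight_two_pow_sub_one k⟩
end

section
/- The number of odd coefficients of the n-th Fibonacci polynomial equals the n-th term of Stern's diatomic sequence, where Stern's sequence satisfies v(0)=1, v(2n+1)=v(n), v(2n)=v(n)+v(n-1) for n ≥ 1. -/
/-!
Reduce modulo 2: the odd coefficients of `p_n` are the support of its image `q_n` in `𝔽₂[X]`.
In characteristic 2 the Fibonacci recurrence gives `q_{2n+1} = X q_n²` and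
`q_{2n+2} = q_{n+1}² + q_n²`, and squaring is `f(X) ↦ f(X²)`, which preserves the size of the
support. Since `p_n` only has monomials of degree `≡ n (mod 2)`, the supports of `q_{n+1}²` and
`q_n²` lie in different classes mod 4, so they are disjoint. Hence the support sizes obey
Stern's recurrence, which determines a sequence from its value at 0.
-/

open Polynomial

/-- Fibonacci polynomials. -/
noncomputable def fibPoly : ℕ → Polynomial ℤ
  | 0 => 1
  | 1 => X
  | (n + 2) => X * fibPoly (n + 1) + fibPoly n

namespace Polynomial

section Semiring

variable {R : Type*} [Semiring R]

theorem support_X_mul (p : R[X]) : (X * p).support = p.support.map (addRightEmbedding 1) := by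
  ext j
  cases j with
  | zero => simp [mul_coeff_zero]
  | succ k => simp [coeff_X_mul]

theorem support_add_of_disjoint {p q : R[X]} (h : Disjoint p.support q.support) :
    (p + q).support = p.support ∪ q.support := by
  ext j
  have hpq : j ∈ p.support → j ∉ q.support := fun hj => Finset.disjoint_left.mp h hj
  simp only [mem_support_iff, Finset.mem_union, coeff_add, ne_eq] at hpq ⊢
  by_cases hp : p.coeff j = 0 <;> simp_all

end Semiring

theorem support_expand {R : Type*} [CommSemiring R] {k : ℕ} (hk : 0 < k) (p : R[X]) :
    (expand R k p).support = p.support.image (k * ·) := by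
  ext j
  simp only [mem_support_iff, Finset.mem_image, coeff_expand hk]
  constructor
  · intro h
    split_ifs at h with hdvd
    · exact ⟨j / k, h, Nat.mul_div_cancel' hdvd⟩
    · exact absurd rfl h
  · rintro ⟨i, hi, rfl⟩
    rwa [if_pos (dvd_mul_right k i), Nat.mul_div_cancel_left i hk]

end Polynomial

theorem mod_two_eq_of_mem_support_fibPoly {n j : ℕ} (hj : j ∈ (fibPoly n).support) :
    j % 2 = n % 2 := by
  induction n using fibPoly.induct generalizing j with
  | case1 =>
    rw [fibPoly, mem_support_iff, coeff_one] at hj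
    aesop
  | case2 =>
    rw [fibPoly, mem_support_iff, coeff_X] at hj
    aesop
  | case3 n ih₁ ih₀ =>
    rw [fibPoly] at hj
    rcases Finset.mem_union.mp (support_add hj) with hj | hj
    · rw [support_X_mul, Finset.mem_map] at hj
      obtain ⟨i, hi, rfl⟩ := hj
      have := ih₁ hi
      simp only [addRightEmbedding_apply]
      omega
    · have := ih₀ hj
      omega

theorem support_sq_zmod_two (p : (ZMod 2)[X]) : (p ^ 2).support = p.support.image (2 * ·) := by
  rw [← ZMod.expand_card, support_expand two_pos]

theorem card_support_sq_zmod_two (p : (ZMod 2)[X]) : (p ^ 2).support.card = p.support.card := by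
  rw [support_sq_zmod_two, Finset.card_image_of_injective _ (mul_right_injective₀ two_ne_zero)]

noncomputable def fibPolyMod2 (n : ℕ) : (ZMod 2)[X] :=
  (fibPoly n).map (Int.castRingHom (ZMod 2))

@[simp] theorem fibPolyMod2_zero : fibPolyMod2 0 = 1 := by simp [fibPolyMod2, fibPoly]

@[simp] theorem fibPolyMod2_one : fibPolyMod2 1 = X := by simp [fibPolyMod2, fibPoly]

theorem fibPolyMod2_add_two (n : ℕ) :
    fibPolyMod2 (n + 2) = X * fibPolyMod2 (n + 1) + fibPolyMod2 n := by
  simp [fibPolyMod2, fibPoly]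

theorem mod_two_eq_of_mem_support_fibPolyMod2 {n j : ℕ} (hj : j ∈ (fibPolyMod2 n).support) :
    j % 2 = n % 2 :=
  mod_two_eq_of_mem_support_fibPoly (support_map_subset _ _ hj)

theorem fibPolyMod2_doubling (n : ℕ) :
    fibPolyMod2 (2 * n + 1) = X * fibPolyMod2 n ^ 2 ∧
      fibPolyMod2 (2 * n + 2) = fibPolyMod2 (n + 1) ^ 2 + fibPolyMod2 n ^ 2 := by
  have two : (2 : (ZMod 2)[X]) = 0 := CharTwo.two_eq_zero
  induction n with
  | zero => simp [fibPolyMod2_add_two, sq]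
  | succ n ih =>
    obtain ⟨hodd, heven⟩ := ih
    have hodd' : fibPolyMod2 (2 * n + 3) = X * fibPolyMod2 (n + 1) ^ 2 := by
      rw [fibPolyMod2_add_two, heven, hodd]
      linear_combination X * fibPolyMod2 n ^ 2 * two
    refine ⟨hodd', ?_⟩
    rw [show 2 * (n + 1) + 2 = 2 * n + 2 + 2 by ring, fibPolyMod2_add_two, hodd', heven,
      fibPolyMod2_add_two n]
    linear_combination -(X * fibPolyMod2 (n + 1) * fibPolyMod2 n) * two

def SatisfiesSternRecurrence (u : ℕ → ℕ) : Prop :=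
  (∀ n, u (2 * n + 1) = u n) ∧ ∀ n, u (2 * n + 2) = u (n + 1) + u n

theorem SatisfiesSternRecurrence.eq {u w : ℕ → ℕ} (hu : SatisfiesSternRecurrence u)
    (hw : SatisfiesSternRecurrence w) (h0 : u 0 = w 0) : u = w := by
  funext n
  induction n using Nat.strong_induction_on with
  | _ n ih =>
    obtain ⟨m, rfl | rfl⟩ := Nat.even_or_odd' n
    · cases m with
      | zero => exact h0
      | succ m => rw [mul_add_one, hu.2 m, hw.2 m, ih (m + 1) (by omega), ih m (by omega)]
    · rw [hu.1, hw.1, ih m (by omega)]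

theorem satisfiesSternRecurrence_card_support_fibPolyMod2 :
    SatisfiesSternRecurrence fun n => (fibPolyMod2 n).support.card := by
  refine ⟨fun n => ?_, fun n => ?_⟩ <;> dsimp only
  · rw [(fibPolyMod2_doubling n).1, support_X_mul, Finset.card_map, card_support_sq_zmod_two]
  · have hdisj : Disjoint (fibPolyMod2 (n + 1) ^ 2).support (fibPolyMod2 n ^ 2).support := by
      simp only [support_sq_zmod_two, Finset.disjoint_left, Finset.mem_image]
      rintro _ ⟨i, hi, rfl⟩ ⟨j, hj, hij⟩
      have := mod_two_eq_of_mem_support_fibPolyMod2 hi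
      have := mod_two_eq_of_mem_support_fibPolyMod2 hj
      omega
    rw [(fibPolyMod2_doubling n).2, support_add_of_disjoint hdisj,
      Finset.card_union_of_disjoint hdisj, card_support_sq_zmod_two, card_support_sq_zmod_two]

theorem stmt_14 (v : ℕ → ℕ) (h0 : v 0 = 1)
    (hodd : ∀ n : ℕ, v (2 * n + 1) = v n)
    (heven : ∀ n : ℕ, 1 ≤ n → v (2 * n) = v n + v (n - 1)) :
    ∀ n : ℕ, oddCoeffCount (fibPoly n) = v n := by
  have hv : SatisfiesSternRecurrence v :=
    ⟨hodd, fun n => by simpa [mul_add] using heven (n + 1) n.succ_pos⟩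
  have hv0 : (fibPolyMod2 0).support.card = v 0 := by
    rw [fibPolyMod2_zero, ← C_1, support_C one_ne_zero, h0, Finset.card_singleton]
  intro n
  rw [oddCoeffCount_eq_card_support_map]
  exact congrFun (satisfiesSternRecurrence_card_support_fibPolyMod2.eq hv hv0) n
end

section
/- For Stern's diatomic sequence v with v(0)=1, v(2n+1)=v(n), v(2n)=v(n)+v(n-1), one has v(2(4^k-1)/3) = F(2k+1) for all k ≥ 0, where F denotes the Fibonacci sequence with F(0)=0, F(1)=1. -/
def sternM : ℕ → ℕ
  | 0 => 0
  | k + 1 => 4 * sternM k + 1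

lemma sternM_pow : ∀ k : ℕ, 4 ^ k = 3 * sternM k + 1 := by
  intro k
  induction k with
  | zero => simp [sternM]
  | succ n ih => rw [pow_succ, ih]; show _ = 3 * (4 * sternM n + 1) + 1; ring

lemma sternM_pos (k : ℕ) : 1 ≤ sternM (k + 1) := by
  simp [sternM]

theorem stmt_15 (v : ℕ → ℕ) (h0 : v 0 = 1)
    (hodd : ∀ n : ℕ, v (2 * n + 1) = v n)
    (heven : ∀ n : ℕ, 1 ≤ n → v (2 * n) = v n + v (n - 1)) :
    ∀ k : ℕ, v (2 * (4 ^ k - 1) / 3) = Nat.fib (2 * k + 1) := by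
  have key : ∀ k : ℕ, v (2 * sternM (k + 1)) = Nat.fib (2 * (k + 1) + 1) ∧
      v (2 * sternM (k + 1) - 1) = Nat.fib (2 * (k + 1)) := by
    intro k
    induction k with
    | zero =>
      have h1 : v 1 = 1 := by have := hodd 0; simpa [h0] using this
      have h2 : v 2 = v 1 + v 0 := by have := heven 1 (by norm_num); simpa using this
      have e : 2 * sternM 1 = 2 * 1 := by simp [sternM]
      constructor
      · rw [e]
        show v 2 = Nat.fib 3
        rw [h2, h1, h0]; rfl
      · rw [e]
        show v 1 = Nat.fib 2
        rw [h1]; rfl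
    | succ n ih =>
      obtain ⟨ih1, ih2⟩ := ih
      set m := sternM (n + 1) with hm
      have hmpos : 1 ≤ m := sternM_pos n
      have hnext : sternM (n + 2) = 4 * m + 1 := rfl
      -- v (4m) = v(2m) + v(2m-1)
      have h4m : v (2 * (2 * m)) = v (2 * m) + v (2 * m - 1) := by
        have := heven (2 * m) (by omega)
        simpa using this
      -- v (8m+1) = v (4m)
      have h8m1 : v (2 * (2 * (2 * m)) + 1) = v (2 * (2 * m)) := hodd (2 * (2 * m))
      -- v (4m+1) = v (2m)
      have h4m1 : v (2 * (2 * m) + 1) = v (2 * m) := hodd (2 * m)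
      -- v (8m+2) = v (4m+1) + v (4m)
      have h8m2 : v (2 * (2 * (2 * m) + 1)) = v (2 * (2 * m) + 1) + v (2 * (2 * m)) := by
        have := heven (2 * (2 * m) + 1) (by omega)
        simpa using this
      have hf1 : Nat.fib (2 * (n + 2)) = Nat.fib (2 * (n + 1) + 1) + Nat.fib (2 * (n + 1)) := by
        have : 2 * (n + 2) = (2 * (n + 1)) + 2 := by ring
        rw [this, Nat.fib_add_two]; ring_nf
      have hf2 : Nat.fib (2 * (n + 2) + 1) = Nat.fib (2 * (n + 2)) + Nat.fib (2 * (n + 1) + 1) := by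
        have e1 : 2 * (n + 2) + 1 = (2 * (n + 1) + 1) + 2 := by ring
        have e2 : 2 * (n + 2) = (2 * (n + 1) + 1) + 1 := by ring
        rw [e1, Nat.fib_add_two, e2]
        ring
      constructor
      · have e : 2 * sternM (n + 2) = 2 * (2 * (2 * m) + 1) := by rw [hnext]; ring
        rw [e, h8m2, h4m1, ih1, show v (2 * (2 * m)) = v (2 * m) + v (2 * m - 1) from h4m,
          ih1, ih2, hf2, hf1]
        ring
      · have e : 2 * sternM (n + 2) - 1 = 2 * (2 * (2 * m)) + 1 := by rw [hnext]; ring_nf; omega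
        rw [e, h8m1, h4m, ih1, ih2, hf1]
  intro k
  have ha : 2 * (4 ^ k - 1) / 3 = 2 * sternM k := by
    have := sternM_pow k
    omega
  rw [ha]
  cases k with
  | zero => simpa [sternM] using h0
  | succ n => exact (key n).1
end

section
/- limsup over n of ln(v(n))/ln(n) equals ln(φ)/ln(2), where v is Stern's diatomic sequence and φ = (1+√5)/2. -/
/-!
Write `L = log φ / log 2`, so that `φ ^ k = (2 ^ k) ^ L`. For `n < 2 ^ k` one has
`v n ≤ F (k + 2)` and `v n + v (n + 1) ≤ F (k + 3)`; this pair of bounds propagates from `m` to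
`2m + 1` and `2m + 2`, so `v n ≤ φ ^ 2 * n ^ L`. Conversely, under `n ↦ 4n + 4` the pair
`(v n, v (n + 1))` becomes `(2 v n + v (n + 1), v n + v (n + 1))`, so starting from `n = 0` it runs
through consecutive Fibonacci numbers and `v n ≥ φ⁻¹ * n ^ L` infinitely often. After taking
logarithms and dividing by `log n`, both bounds tend to `L`.
-/

open Filter Real Topology goldenRatio

theorem Real.fib_succ_le_goldenRatio_pow (n : ℕ) : (Nat.fib (n + 1) : ℝ) ≤ φ ^ n := by
  rcases n with _ | m
  · simp
  · rw [← goldenRatio_mul_fib_succ_add_fib, Nat.fib_add_two, Nat.cast_add, add_comm]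
    gcongr
    exact le_mul_of_one_le_left (Nat.cast_nonneg _) one_lt_goldenRatio.le

theorem Real.goldenRatio_pow_le_fib_add_two (n : ℕ) : φ ^ n ≤ (Nat.fib (n + 2) : ℝ) := by
  rcases n with _ | m
  · simp
  · have hfib : (Nat.fib (m + 3) : ℝ) = Nat.fib (m + 1) + (Nat.fib m + Nat.fib (m + 1)) := by
      rw [Nat.fib_add_two, Nat.fib_add_two (n := m)]; push_cast; ring
    rw [← goldenRatio_mul_fib_succ_add_fib, hfib]
    nlinarith [goldenRatio_lt_two, (Nat.cast_nonneg (Nat.fib (m + 1)) : (0 : ℝ) ≤ _)]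

theorem Filter.limsup_eq_of_le_of_frequently_ge {α : Type*} {l : Filter α} {f g h : α → ℝ}
    {L : ℝ} (hg : Tendsto g l (𝓝 L)) (hh : Tendsto h l (𝓝 L)) (hfg : f ≤ᶠ[l] g)
    (hhf : ∃ᶠ x in l, h x ≤ f x) : limsup f l = L := by
  have : l.NeBot := ⟨fun hl => by simp [hl] at hhf⟩
  have hbdd : IsBoundedUnder (· ≤ ·) l f := hg.isBoundedUnder_le.mono_le hfg
  have hcobdd : IsCoboundedUnder (· ≤ ·) l f := by
    refine IsCoboundedUnder.of_frequently_ge (a := L - 1) ?_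
    refine (hhf.and_eventually (hh.eventually (eventually_ge_nhds (sub_one_lt L)))).mono ?_
    exact fun x hx => hx.2.trans hx.1
  refine le_antisymm (hg.limsup_eq ▸ limsup_le_limsup hfg hcobdd hg.isBoundedUnder_le) ?_
  refine (le_limsup_iff' hcobdd hbdd).2 fun y hy => ?_
  exact (hhf.and_eventually (hh.eventually (eventually_ge_nhds hy))).mono
    fun x hx => hx.2.trans hx.1

theorem limsup_div_log_eq {a : ℕ → ℝ} {L C₁ C₂ : ℝ}
    (hup : ∀ n, a n ≤ L * log n + C₁) (hlow : ∃ᶠ n : ℕ in atTop, L * log n - C₂ ≤ a n) :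
    limsup (fun n => a n / log n) atTop = L := by
  have hlog : Tendsto (fun n : ℕ => log n) atTop atTop :=
    tendsto_log_atTop.comp tendsto_natCast_atTop_atTop
  have hlog_pos : ∀ᶠ n : ℕ in atTop, 0 < log n :=
    hlog.eventually_gt_atTop 0
  have hlim (C : ℝ) : Tendsto (fun n : ℕ => L + C / log n) atTop (𝓝 L) := by
    simpa [div_eq_mul_inv] using tendsto_const_nhds.add (hlog.inv_tendsto_atTop.const_mul C)
  refine limsup_eq_of_le_of_frequently_ge (hlim C₁) (by simpa using hlim (-C₂)) ?_ ?_
  · filter_upwards [hlog_pos] with n hn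
    rw [div_le_iff₀ hn, add_mul, div_mul_cancel₀ _ hn.ne']
    linarith [hup n]
  · refine (hlow.and_eventually hlog_pos).mono fun n ⟨hn, hpos⟩ => ?_
    rw [le_div_iff₀ hpos, neg_div, ← sub_eq_add_neg, sub_mul, div_mul_cancel₀ _ hpos.ne']
    linarith

structure IsStern (v : ℕ → ℕ) : Prop where
  zero : v 0 = 1
  odd : ∀ n, v (2 * n + 1) = v n
  even : ∀ n, 1 ≤ n → v (2 * n) = v n + v (n - 1)

namespace IsStern

variable {v : ℕ → ℕ}

theorem apply_one (hv : IsStern v) : v 1 = 1 := by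
  simpa [hv.zero] using hv.odd 0

theorem apply_two_mul_add_two (hv : IsStern v) (n : ℕ) : v (2 * n + 2) = v (n + 1) + v n := by
  simpa [mul_add] using hv.even (n + 1) n.succ_pos

theorem apply_pos (hv : IsStern v) (n : ℕ) : 0 < v n := by
  induction n using Nat.strong_induction_on with
  | _ n ih =>
    obtain ⟨m, rfl | rfl⟩ := n.even_or_odd'
    · rcases m with _ | m
      · simp [hv.zero]
      · rw [mul_add, mul_one, hv.apply_two_mul_add_two]
        exact Nat.add_pos_right _ (ih m (by omega))
    · rw [hv.odd]
      exact ih m (by omega)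

theorem apply_le_fib (hv : IsStern v) {k n : ℕ} (hn : n < 2 ^ k) :
    v n ≤ Nat.fib (k + 2) ∧ v n + v (n + 1) ≤ Nat.fib (k + 3) := by
  induction k generalizing n with
  | zero =>
    obtain rfl : n = 0 := by simpa using hn
    simp [hv.zero, hv.apply_one, Nat.fib_add_two]
  | succ k ih =>
    have hfib : Nat.fib (k + 4) = Nat.fib (k + 2) + Nat.fib (k + 3) := Nat.fib_add_two
    have hmono : Nat.fib (k + 2) ≤ Nat.fib (k + 3) := Nat.fib_mono (by omega)
    rw [pow_succ] at hn
    rw [show k + 1 + 2 = k + 3 from rfl, show k + 1 + 3 = k + 4 from rfl]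
    obtain ⟨m, rfl | rfl⟩ := n.even_or_odd'
    · rcases m with _ | m
      · have : 2 ≤ Nat.fib (k + 3) := Nat.fib_add_two_strictMono.monotone (by omega : 1 ≤ k + 1)
        simp only [mul_zero, zero_add, hv.zero, hv.apply_one]
        omega
      · have h₁ := ih (n := m) (by omega)
        have h₂ := ih (n := m + 1) (by omega)
        rw [mul_add, mul_one, hv.apply_two_mul_add_two,
          show 2 * m + 2 + 1 = 2 * (m + 1) + 1 by ring, hv.odd]
        omega
    · have h₁ := ih (n := m) (by omega)
      rw [hv.odd, show 2 * m + 1 + 1 = 2 * m + 2 by ring, hv.apply_two_mul_add_two]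
      omega

theorem log_apply_le (hv : IsStern v) (n : ℕ) :
    log (v n) ≤ log φ / log 2 * log n + 2 * log φ := by
  have hφ : 0 ≤ log φ := log_nonneg one_lt_goldenRatio.le
  rcases n.eq_zero_or_pos with rfl | hn
  · simp [hv.zero, hφ]
  set k := Nat.log 2 n
  have hvn : (v n : ℝ) ≤ φ ^ (k + 2) := by
    calc (v n : ℝ) ≤ Nat.fib (k + 1 + 2) := by
          exact_mod_cast (hv.apply_le_fib (Nat.lt_pow_succ_log_self one_lt_two n)).1
      _ ≤ φ ^ (k + 2) := fib_succ_le_goldenRatio_pow _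
  have hkn : log (2 ^ k : ℕ) ≤ log n :=
    log_le_log (by positivity) (by exact_mod_cast Nat.pow_log_le_self 2 hn.ne')
  calc log (v n) ≤ log (φ ^ (k + 2)) := log_le_log (by exact_mod_cast hv.apply_pos n) hvn
    _ = log φ / log 2 * log (2 ^ k : ℕ) + 2 * log φ := by
      push_cast
      rw [log_pow, log_pow]
      field_simp
      push_cast
      ring
    _ ≤ log φ / log 2 * log n + 2 * log φ := by gcongr

theorem exists_apply_eq_fib (hv : IsStern v) (i : ℕ) :
    ∃ n, 3 * n + 4 = 4 ^ (i + 1) ∧ v n = Nat.fib (2 * i + 2) ∧ v (n + 1) = Nat.fib (2 * i + 1) := by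
  induction i with
  | zero => exact ⟨0, rfl, by simp [hv.zero, hv.apply_one]⟩
  | succ i ih =>
    obtain ⟨n, hn, hv₀, hv₁⟩ := ih
    have hfib₃ : Nat.fib (2 * i + 3) = Nat.fib (2 * i + 1) + Nat.fib (2 * i + 2) :=
      Nat.fib_add_two
    have hfib₄ : Nat.fib (2 * i + 4) = Nat.fib (2 * i + 2) + Nat.fib (2 * i + 3) :=
      Nat.fib_add_two
    refine ⟨4 * n + 4, by rw [pow_succ]; omega, ?_, ?_⟩
    · rw [show 4 * n + 4 = 2 * (2 * n + 1) + 2 by ring, hv.apply_two_mul_add_two, hv.odd,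
        show 2 * n + 1 + 1 = 2 * n + 2 by ring, hv.apply_two_mul_add_two, hv₀, hv₁,
        show 2 * (i + 1) + 2 = 2 * i + 4 by ring]
      omega
    · rw [show 4 * n + 4 + 1 = 2 * (2 * n + 2) + 1 by ring, hv.odd, hv.apply_two_mul_add_two,
        hv₀, hv₁, show 2 * (i + 1) + 1 = 2 * i + 3 by ring]
      omega

theorem frequently_log_apply_ge (hv : IsStern v) :
    ∃ᶠ n : ℕ in atTop, log φ / log 2 * log n - log φ ≤ log (v n) := by
  refine frequently_atTop.2 fun (a : ℕ) => ?_
  obtain ⟨n, hn, hvn, -⟩ := hv.exists_apply_eq_fib (a + 1)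
  have ha : a < 4 ^ a := Nat.lt_pow_self (by norm_num)
  rw [pow_succ, pow_succ] at hn
  refine ⟨n, by omega, ?_⟩
  have hn2 : log n ≤ log (2 ^ (2 * a + 3) : ℕ) := by
    have h8 : 2 ^ (2 * a + 3) = 4 ^ a * 8 := by rw [pow_add, pow_mul]; norm_num
    exact log_le_log (by exact_mod_cast (by omega : 0 < n)) (Nat.cast_le.2 (by omega))
  calc log φ / log 2 * log n - log φ ≤ log φ / log 2 * log (2 ^ (2 * a + 3) : ℕ) - log φ := by
        gcongr
        exact div_nonneg (log_nonneg one_lt_goldenRatio.le) (log_nonneg one_le_two)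
    _ = log (φ ^ (2 * (a + 1))) := by
      push_cast
      rw [log_pow, log_pow]
      field_simp
      push_cast
      ring
    _ ≤ log (v n) := by
      rw [hvn]
      exact log_le_log (by positivity) (goldenRatio_pow_le_fib_add_two _)

end IsStern

theorem stmt_16 (v : ℕ → ℕ) (h0 : v 0 = 1)
    (hodd : ∀ n : ℕ, v (2 * n + 1) = v n)
    (heven : ∀ n : ℕ, 1 ≤ n → v (2 * n) = v n + v (n - 1)) :
    Filter.limsup (fun n : ℕ => Real.log (v n) / Real.log n) Filter.atTop =
      Real.log ((1 + Real.sqrt 5) / 2) / Real.log 2 := by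
  have hv : IsStern v := ⟨h0, hodd, heven⟩
  exact limsup_div_log_eq hv.log_apply_le hv.frequently_log_apply_ge
end
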